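/- arXiv:math/0502427 — 11 statements merged into one kernel-verified Lean document; each statement's English description precedes it below -/
import Mathlib

section
/- Let P be a field and n ≥ 1, and let A = P[x_1,…,x_n] be the polynomial algebra in n variables over P. If μ : A → A is a bijection that commutes with every P-algebra endomorphism of A (i.e., μ ∘ s = s ∘ μ for all s ∈ End(A)), then μ is linear: there exist a, b ∈ P with a ≠ 0 such that μ(u) = a·u + b for every u ∈ A (where b is identified with the constant polynomial b). In other words, the free finitely generated commutative algebra A is almost central. -/
/-!
Applying the hypothesis to the endomorphism `xⱼ ↦ u` gives `μ u = f(u)` for the one-variable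
polynomial `f` obtained from `μ(x₁)` by identifying all variables. As `μ` is onto, `x₁ = f(v)`
for some `v`; identifying the variables once more turns this into `X = f ∘ v̄` in `P[X]`,
so `deg f = 1`.
-/

open scoped Polynomial

namespace MvPolynomial

variable {R σ : Type*} [CommSemiring R]

theorem aeval_const_eq_polynomial_aeval {S : Type*} [CommSemiring S] [Algebra R S] (u : S)
    (q : MvPolynomial σ R) :
    aeval (fun _ => u) q = Polynomial.aeval u (aeval (fun _ => (Polynomial.X : R[X])) q) := by
  rw [comp_aeval_apply, Polynomial.aeval_X]

theorem apply_eq_aeval_const_of_commute_algHom (μ : MvPolynomial σ R → MvPolynomial σ R)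
    (hcomm : ∀ s : MvPolynomial σ R →ₐ[R] MvPolynomial σ R, μ ∘ s = s ∘ μ) (i : σ)
    (u : MvPolynomial σ R) : μ u = aeval (fun _ => u) (μ (X i)) := by
  simpa using congrFun (hcomm (aeval fun _ => u)) (X i)

theorem natDegree_eq_one_of_aeval_eq_X [NoZeroDivisors R] [Nontrivial R] {f : R[X]}
    {v : MvPolynomial σ R} {i : σ} (hf : Polynomial.aeval v f = X i) : f.natDegree = 1 := by
  have hcomp : f.comp (aeval (fun _ => (Polynomial.X : R[X])) v) = Polynomial.X := by
    rw [Polynomial.comp_eq_aeval, Polynomial.aeval_algHom_apply, hf, aeval_X]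
  have hdeg := congrArg Polynomial.natDegree hcomp
  rw [Polynomial.natDegree_comp, Polynomial.natDegree_X] at hdeg
  exact Nat.eq_one_of_mul_eq_one_right hdeg

end MvPolynomial

/-- The free finitely generated commutative algebra P[x_1,…,x_n]
is almost central: every bijection commuting with all P-algebra endomorphisms
is linear, `u ↦ a·u + b` with `a ≠ 0`. -/
theorem almost_central {P : Type*} [Field P] (n : ℕ) (hn : 1 ≤ n)
    (μ : MvPolynomial (Fin n) P → MvPolynomial (Fin n) P)
    (hbij : Function.Bijective μ)
    (hcomm : ∀ s : MvPolynomial (Fin n) P →ₐ[P] MvPolynomial (Fin n) P,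
      μ ∘ ⇑s = ⇑s ∘ μ) :
    ∃ a b : P, a ≠ 0 ∧
      ∀ u : MvPolynomial (Fin n) P,
        μ u = MvPolynomial.C a * u + MvPolynomial.C b := by
  let i : Fin n := ⟨0, hn⟩
  set f : P[X] := MvPolynomial.aeval (fun _ => Polynomial.X) (μ (MvPolynomial.X i))
  have hμ : ∀ u, μ u = Polynomial.aeval u f := fun u => by
    rw [MvPolynomial.apply_eq_aeval_const_of_commute_algHom μ hcomm i,
      MvPolynomial.aeval_const_eq_polynomial_aeval]
  obtain ⟨v, hv⟩ := hbij.2 (MvPolynomial.X i)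
  obtain ⟨a, ha, b, hab⟩ := Polynomial.natDegree_eq_one.mp
    (MvPolynomial.natDegree_eq_one_of_aeval_eq_X (f := f) (hμ v ▸ hv))
  refine ⟨a, b, ha, fun u => ?_⟩
  rw [hμ, ← hab]
  simp [MvPolynomial.algebraMap_eq]
end

section
/- Let P be a field, n ≥ 1, and A = P[x_1,…,x_n]. If μ : A → A is a bijection that commutes with every P-algebra endomorphism of A, then there exists a one-variable polynomial r ∈ P[t] such that μ(u) = r(u) for every u ∈ A, where r(u) denotes the substitution of u for t in r (the evaluation of r at u in the P-algebra A). -/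
/-- A bijection of P[x_1,…,x_n] commuting with every P-algebra
endomorphism is given by substitution into a one-variable polynomial `r`:
`μ(u) = r(u)` for all `u`. -/
theorem central_bijection_is_polynomial {P : Type*} [Field P] (n : ℕ) (hn : 1 ≤ n)
    (μ : MvPolynomial (Fin n) P → MvPolynomial (Fin n) P)
    (hbij : Function.Bijective μ)
    (hcomm : ∀ s : MvPolynomial (Fin n) P →ₐ[P] MvPolynomial (Fin n) P,
      μ ∘ ⇑s = ⇑s ∘ μ) :
    ∃ r : Polynomial P,
      ∀ u : MvPolynomial (Fin n) P, μ u = Polynomial.aeval u r := by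
  set i0 : Fin n := ⟨0, hn⟩
  refine ⟨MvPolynomial.aeval (fun _ => Polynomial.X) (μ (MvPolynomial.X i0)), fun u => ?_⟩
  have h := congrFun (hcomm (MvPolynomial.aeval (fun _ => u))) (MvPolynomial.X i0)
  simp only [Function.comp_apply, MvPolynomial.aeval_X] at h
  rw [h, ← AlgHom.comp_apply, MvPolynomial.comp_aeval]
  simp
end

section
/- Let P be a field, n ≥ 1, A = P[x_1,…,x_n], and let r ∈ P[t] be a one-variable polynomial over P. If the substitution map A → A given by u ↦ r(u) is a bijection of A, then r has degree exactly 1, i.e., r(t) = a₁·t + a₀ with a₁ ≠ 0. -/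
/-- If substitution `u ↦ r(u)` into a one-variable polynomial `r`
is a bijection of P[x_1,…,x_n], then `r` has degree exactly 1, i.e.
`r = a₁·t + a₀` with `a₁ ≠ 0`. -/
theorem bijective_substitution_is_linear {P : Type*} [Field P] (n : ℕ) (hn : 1 ≤ n)
    (r : Polynomial P)
    (hbij : Function.Bijective
      (fun u : MvPolynomial (Fin n) P => Polynomial.aeval u r)) :
    r.degree = 1 ∧
      ∃ a₁ a₀ : P, a₁ ≠ 0 ∧ r = Polynomial.C a₁ * Polynomial.X + Polynomial.C a₀ := by
  -- From surjectivity, some u maps to X 0.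
  obtain ⟨u, hu⟩ := hbij.2 (MvPolynomial.X ⟨0, hn⟩)
  simp only at hu
  -- Push everything to one-variable polynomials via X i ↦ X.
  set φ : MvPolynomial (Fin n) P →ₐ[P] Polynomial P :=
    MvPolynomial.aeval (fun _ => Polynomial.X) with hφ
  have key : Polynomial.aeval (φ u) r = Polynomial.X := by
    rw [Polynomial.aeval_algHom_apply, hu, hφ, MvPolynomial.aeval_X]
  have hcomp : r.comp (φ u) = Polynomial.X := by
    rwa [Polynomial.comp_eq_aeval]
  have hdeg : r.natDegree * (φ u).natDegree = 1 := by
    rw [← Polynomial.natDegree_comp, hcomp, Polynomial.natDegree_X]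
  have hr1 : r.natDegree = 1 := Nat.eq_one_of_mul_eq_one_right hdeg
  obtain ⟨a, ha, b, hab⟩ := Polynomial.natDegree_eq_one.mp hr1
  refine ⟨?_, a, b, ha, hab.symm⟩
  have hr0 : r ≠ 0 := by
    intro h; rw [h] at hr1; simp at hr1
  rw [Polynomial.degree_eq_natDegree hr0, hr1]
  rfl
end

section
/- Let P be a field, n ≥ 1, and A = P[x_1,…,x_n]. Suppose a bijection μ : A → A generates an automorphism of End(A), i.e., for every P-algebra endomorphism s of A both μ ∘ s ∘ μ⁻¹ and μ⁻¹ ∘ s ∘ μ are (the underlying functions of) P-algebra endomorphisms of A. Then μ maps the set of constant polynomials bijectively onto itself: for every a ∈ P, μ(a) ∈ P, and every constant polynomial is of the form μ(a) for some a ∈ P. -/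
/-- A bijection `μ` of P[x_1,…,x_n] generates an automorphism of the
endomorphism monoid if for every P-algebra endomorphism `s`, both
`μ ∘ s ∘ μ⁻¹` and `μ⁻¹ ∘ s ∘ μ` are P-algebra endomorphisms. -/
def GeneratesAut {P : Type*} [Field P] {n : ℕ}
    (μ : MvPolynomial (Fin n) P ≃ MvPolynomial (Fin n) P) : Prop :=
  ∀ s : MvPolynomial (Fin n) P →ₐ[P] MvPolynomial (Fin n) P,
    (∃ t : MvPolynomial (Fin n) P →ₐ[P] MvPolynomial (Fin n) P,
      ⇑t = ⇑μ ∘ ⇑s ∘ ⇑μ.symm) ∧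
    (∃ t : MvPolynomial (Fin n) P →ₐ[P] MvPolynomial (Fin n) P,
      ⇑t = ⇑μ.symm ∘ ⇑s ∘ ⇑μ)

/-- Any P-algebra endomorphism fixes constants. -/
lemma algHom_fixes_C {P : Type*} [Field P] {n : ℕ}
    (s : MvPolynomial (Fin n) P →ₐ[P] MvPolynomial (Fin n) P) (a : P) :
    s (MvPolynomial.C a) = MvPolynomial.C a := by
  have := s.commutes a
  simpa [MvPolynomial.algebraMap_eq] using this

/-- A bijection generating an automorphism of End(P[X]) maps the
set of constant polynomials bijectively onto itself. -/
theorem mu_bijOn_constants {P : Type*} [Field P] (n : ℕ) (hn : 1 ≤ n)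
    (μ : MvPolynomial (Fin n) P ≃ MvPolynomial (Fin n) P)
    (hμ : GeneratesAut μ) :
    Set.BijOn μ (Set.range (MvPolynomial.C : P → MvPolynomial (Fin n) P))
      (Set.range (MvPolynomial.C : P → MvPolynomial (Fin n) P)) := by
  set s₀ : MvPolynomial (Fin n) P →ₐ[P] MvPolynomial (Fin n) P :=
    MvPolynomial.aeval (0 : Fin n → MvPolynomial (Fin n) P) with hs₀
  obtain ⟨⟨t₁, ht₁⟩, ⟨t₂, ht₂⟩⟩ := hμ s₀
  refine ⟨?_, Set.injOn_of_injective μ.injective, ?_⟩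
  · rintro x ⟨a, rfl⟩
    have h1 : t₂ (MvPolynomial.C a) = MvPolynomial.C a := algHom_fixes_C t₂ a
    rw [ht₂] at h1
    have h2 : s₀ (μ (MvPolynomial.C a)) = μ (MvPolynomial.C a) := by
      have := congrArg μ h1
      simpa using this
    rw [hs₀] at h2
    simp only [MvPolynomial.aeval_zero] at h2
    exact ⟨_, h2⟩
  · rintro x ⟨a, rfl⟩
    have h1 : t₁ (MvPolynomial.C a) = MvPolynomial.C a := algHom_fixes_C t₁ a
    rw [ht₁] at h1
    have h2 : s₀ (μ.symm (MvPolynomial.C a)) = μ.symm (MvPolynomial.C a) := by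
      have := congrArg μ.symm h1
      simpa using this
    rw [hs₀] at h2
    simp only [MvPolynomial.aeval_zero] at h2
    refine ⟨μ.symm (MvPolynomial.C a), ⟨_, h2⟩, by simp⟩
end

section
/- Let P be a field, n ≥ 1, and A = P[x_1,…,x_n]. If a bijection μ : A → A generates an automorphism of End(A), then μ transforms the base (x_1,…,x_n) of A into a base of A: the P-algebra endomorphism η of A determined by η(x_i) = μ(x_i) for i = 1,…,n is a P-algebra automorphism of A. -/
/-- If a bijection `μ` generates an automorphism of End(P[X]),
then `μ` maps the base (x_1,…,x_n) to a base: the endomorphism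
`η : x_i ↦ μ(x_i)` is a P-algebra automorphism, i.e. bijective. -/
theorem mu_maps_base_to_base {P : Type*} [Field P] (n : ℕ) (hn : 1 ≤ n)
    (μ : MvPolynomial (Fin n) P ≃ MvPolynomial (Fin n) P)
    (hμ : GeneratesAut μ) :
    Function.Bijective
      ⇑(MvPolynomial.aeval (fun i : Fin n => μ (MvPolynomial.X i)) :
        MvPolynomial (Fin n) P →ₐ[P] MvPolynomial (Fin n) P) := by
  set η : MvPolynomial (Fin n) P →ₐ[P] MvPolynomial (Fin n) P :=
    MvPolynomial.aeval (fun i : Fin n => μ (MvPolynomial.X i)) with hη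
  set θ : MvPolynomial (Fin n) P →ₐ[P] MvPolynomial (Fin n) P :=
    MvPolynomial.aeval (fun i : Fin n => μ.symm (MvPolynomial.X i)) with hθ
  obtain ⟨t, ht⟩ := (hμ η).2
  obtain ⟨r, hr⟩ := (hμ θ).1
  have hηX : ∀ i, η (MvPolynomial.X i) = μ (MvPolynomial.X i) := by
    intro i; simp [hη]
  have hθX : ∀ i, θ (MvPolynomial.X i) = μ.symm (MvPolynomial.X i) := by
    intro i; simp [hθ]
  have htfun : ∀ a, t a = μ.symm (η (μ a)) := fun a => congrFun ht a
  have hrfun : ∀ a, r a = μ (θ (μ.symm a)) := fun a => congrFun hr a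
  -- r ∘ η = id
  have hrη : r.comp η = AlgHom.id P _ := by
    apply MvPolynomial.algHom_ext
    intro i
    simp only [AlgHom.comp_apply, AlgHom.id_apply, hηX, hrfun,
      Equiv.symm_apply_apply, hθX, Equiv.apply_symm_apply]
  -- t ∘ θ = id
  have htθ : t.comp θ = AlgHom.id P _ := by
    apply MvPolynomial.algHom_ext
    intro i
    simp only [AlgHom.comp_apply, AlgHom.id_apply, hθX, htfun,
      Equiv.apply_symm_apply, hηX]
    exact Equiv.symm_apply_apply μ _
  -- η ∘ r = id (conjugate of t ∘ θ = id)
  have hηr : ∀ a, η (r a) = a := by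
    intro a
    have h1 : t (θ (μ.symm a)) = μ.symm a := by
      simpa using DFunLike.congr_fun htθ (μ.symm a)
    calc η (r a) = η (μ (θ (μ.symm a))) := by rw [hrfun]
      _ = μ (μ.symm (η (μ (θ (μ.symm a))))) := (μ.apply_symm_apply _).symm
      _ = μ (t (θ (μ.symm a))) := by rw [htfun]
      _ = μ (μ.symm a) := by rw [h1]
      _ = a := μ.apply_symm_apply a
  constructor
  · intro a b hab
    have := congrArg r hab
    have ha := DFunLike.congr_fun hrη a
    have hb := DFunLike.congr_fun hrη b
    simp only [AlgHom.coe_comp, Function.comp_apply, AlgHom.coe_id, id_eq] at ha hb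
    rw [← ha, ← hb, this]
  · intro a
    exact ⟨r a, hηr a⟩
end

section
/- Let P be an algebraically closed field and n ≥ 2. If a polynomial g ∈ P[x_1,…,x_n] has exactly the same zero set in the affine space P^n as the polynomial x_1·x_2 (i.e., for every point p ∈ P^n, g(p) = 0 if and only if p_1·p_2 = 0), then g = c·x_1^k·x_2^l for some nonzero c ∈ P and integers k, l ≥ 1. -/
/-!
By the Nullstellensatz, `g` divides a power `(x₁ x₂)^N`. Since `x₁` and `x₂` are prime in the
factorial ring `P[x₁, …, xₙ]`, `g` is then associated to some `x₁^k x₂^l`, i.e. equal to it up to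
a nonzero constant. Evaluating at a point with `x₁ = 0` (resp. `x₂ = 0`) and all other
coordinates `1`, where `g` must vanish, forces `k ≥ 1` (resp. `l ≥ 1`).
-/

open MvPolynomial

theorem associated_pow_mul_pow_of_dvd_pow_mul_pow {M : Type*} [CommMonoidWithZero M]
    [IsCancelMulZero M] [DecompositionMonoid M] {p q a : M} (hp : Prime p) (hq : Prime q) {i j : ℕ}
    (h : a ∣ p ^ i * q ^ j) : ∃ k l : ℕ, Associated a (p ^ k * q ^ l) := by
  obtain ⟨a₁, a₂, h₁, h₂, rfl⟩ := exists_dvd_and_dvd_of_dvd_mul h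
  obtain ⟨k, -, hk⟩ := (dvd_prime_pow hp i).mp h₁
  obtain ⟨l, -, hl⟩ := (dvd_prime_pow hq j).mp h₂
  exact ⟨k, l, hk.mul_mul hl⟩

namespace MvPolynomial

variable {σ K : Type*} [Field K]

theorem exists_dvd_pow_of_eval_eq_zero [IsAlgClosed K] [Finite σ] {f g : MvPolynomial σ K}
    (h : ∀ x : σ → K, eval x g = 0 → eval x f = 0) : ∃ N : ℕ, g ∣ f ^ N := by
  have hf : f ∈ (Ideal.span {g}).radical := by
    rw [← vanishingIdeal_zeroLocus_eq_radical (K := K)]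
    exact fun x hx ↦ h x (hx g (Ideal.subset_span rfl))
  obtain ⟨N, hN⟩ := hf
  exact ⟨N, Ideal.mem_span_singleton.mp hN⟩

theorem exists_eq_C_mul_of_associated {f g : MvPolynomial σ K} (h : Associated g f) :
    ∃ c : K, c ≠ 0 ∧ g = C c * f := by
  obtain ⟨u, rfl⟩ := h.symm
  obtain ⟨c, hc, hu⟩ := isUnit_iff_eq_C_of_isReduced.mp u.isUnit
  exact ⟨c, hc.ne_zero, by rw [hu, mul_comm]⟩

end MvPolynomial

/-- Over an algebraically closed field, a polynomial in n ≥ 2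
variables with exactly the same zero set as x_1·x_2 equals c·x_1^k·x_2^l
with c ≠ 0 and k, l ≥ 1. -/
theorem same_zero_set_as_x1x2 {P : Type*} [Field P] [IsAlgClosed P]
    (n : ℕ) (hn : 2 ≤ n) (g : MvPolynomial (Fin n) P)
    (hzero : ∀ p : Fin n → P,
      MvPolynomial.eval p g = 0 ↔ p ⟨0, by omega⟩ * p ⟨1, by omega⟩ = 0) :
    ∃ c : P, c ≠ 0 ∧ ∃ k l : ℕ, 1 ≤ k ∧ 1 ≤ l ∧
      g = MvPolynomial.C c * MvPolynomial.X ⟨0, by omega⟩ ^ k *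
            MvPolynomial.X ⟨1, by omega⟩ ^ l := by
  set i₀ : Fin n := ⟨0, by omega⟩
  set i₁ : Fin n := ⟨1, by omega⟩
  have hi : i₀ ≠ i₁ := by simp [i₀, i₁, Fin.ext_iff]
  obtain ⟨N, hN⟩ := exists_dvd_pow_of_eval_eq_zero (f := (X i₀ * X i₁ : MvPolynomial (Fin n) P))
    fun x hx ↦ by simpa using (hzero x).mp hx
  rw [mul_pow] at hN
  obtain ⟨k, l, hkl⟩ := associated_pow_mul_pow_of_dvd_pow_mul_pow X_prime X_prime hN
  obtain ⟨c, hc, rfl⟩ := exists_eq_C_mul_of_associated hkl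
  have hk : 1 ≤ k := by
    simpa [Nat.one_le_iff_ne_zero, hi.symm, hc] using
      (hzero (Function.update 1 i₀ 0)).mpr (by simp)
  have hl : 1 ≤ l := by
    simpa [Nat.one_le_iff_ne_zero, hi, hc] using
      (hzero (Function.update 1 i₁ 0)).mpr (by simp)
  exact ⟨c, hc, k, l, hk, hl, (mul_assoc ..).symm⟩
end

section
/- Let P be an algebraically closed field, n ≥ 1, and A = P[x_1,…,x_n]. Let μ : A → A be a bijection generating an automorphism of End(A) and suppose μ(0) = 0, μ(1) = 1, and μ(x_i) = x_i for all i = 1,…,n. Then μ is multiplicative: μ(u·v) = μ(u)·μ(v) for all u, v ∈ A. -/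
open MvPolynomial in
/-- The master identity: conjugating the substitution endomorphism `aeval w`
by `μ` gives the substitution endomorphism `aeval (μ ∘ w)`. -/
lemma mu_key {P : Type*} [Field P] {n : ℕ}
    (μ : MvPolynomial (Fin n) P ≃ MvPolynomial (Fin n) P)
    (hμ : GeneratesAut μ)
    (hX : ∀ i : Fin n, μ (MvPolynomial.X i) = MvPolynomial.X i)
    (w : Fin n → MvPolynomial (Fin n) P) (p : MvPolynomial (Fin n) P) :
    μ (aeval w p) = aeval (fun i => μ (w i)) (μ p) := by
  obtain ⟨t, ht⟩ := (hμ (aeval w)).1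
  have hXs : ∀ i, μ.symm (X i) = X i := by
    intro i
    conv_lhs => rw [← hX i]
    exact μ.symm_apply_apply _
  have htX : ∀ i, t (X i) = μ (w i) := by
    intro i
    have := congrFun ht (X i)
    simp only [Function.comp_apply, hXs i] at this
    simpa using this
  have ht2 : t = aeval (fun i => μ (w i)) := by
    apply algHom_ext
    intro i
    simp [htX i]
  have h3 := congrFun ht (μ p)
  simp only [Function.comp_apply, μ.symm_apply_apply] at h3
  rw [← h3, ht2]

open MvPolynomial in
/-- Substituting constants is the same as `C ∘ eval`. -/
lemma aeval_C_comp {P : Type*} [CommSemiring P] {n : ℕ} (a : Fin n → P)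
    (p : MvPolynomial (Fin n) P) :
    aeval (fun i => (C (a i) : MvPolynomial (Fin n) P)) p = C (eval a p) := by
  induction p using MvPolynomial.induction_on with
  | C c => simp
  | add p q hp hq => rw [map_add, hp, hq, map_add, map_add]
  | mul_X p i hp => rw [map_mul, hp, aeval_X, map_mul, eval_X, map_mul]

open MvPolynomial in
/-- `aeval` with values in the coefficient field is `eval`. -/
lemma aeval_self_eq_eval {P : Type*} [CommSemiring P] {n : ℕ} (f : Fin n → P)
    (p : MvPolynomial (Fin n) P) : aeval f p = eval f p := by
  rw [← coe_aeval_eq_eval]; rfl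

open MvPolynomial in
/-- `μ` maps constants to constants. -/
lemma mu_const {P : Type*} [Field P] {n : ℕ}
    (μ : MvPolynomial (Fin n) P ≃ MvPolynomial (Fin n) P)
    (hμ : GeneratesAut μ)
    (h0 : μ 0 = 0)
    (hX : ∀ i : Fin n, μ (MvPolynomial.X i) = MvPolynomial.X i)
    (c : P) : ∃ d : P, μ (C c) = C d := by
  have h := mu_key μ hμ hX (fun _ => 0) (C c)
  simp only [h0] at h
  have hL : aeval (fun _ : Fin n => (0 : MvPolynomial (Fin n) P)) (C c)
      = (C c : MvPolynomial (Fin n) P) := by simp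
  rw [hL] at h
  refine ⟨constantCoeff (μ (C c)), ?_⟩
  have hz : (fun _ : Fin n => (0 : MvPolynomial (Fin n) P)) = 0 := rfl
  conv_lhs => rw [h]
  rw [hz, aeval_zero, algebraMap_eq]

open MvPolynomial Polynomial in
/-- Lemma 3.1: Over an algebraically closed field, a bijection
generating an automorphism of End(P[X]) with μ(0)=0, μ(1)=1, μ(x_i)=x_i
is multiplicative. -/
theorem mu_multiplicative {P : Type*} [Field P] [IsAlgClosed P]
    (n : ℕ) (hn : 1 ≤ n)
    (μ : MvPolynomial (Fin n) P ≃ MvPolynomial (Fin n) P)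
    (hμ : GeneratesAut μ)
    (h0 : μ 0 = 0) (h1 : μ 1 = 1)
    (hX : ∀ i : Fin n, μ (MvPolynomial.X i) = MvPolynomial.X i) :
    ∀ u v : MvPolynomial (Fin n) P, μ (u * v) = μ u * μ v := by
  -- μ.symm also generates an automorphism and fixes 0, 1, X i
  have hμs : GeneratesAut μ.symm := by
    intro s
    obtain ⟨⟨t1, ht1⟩, ⟨t2, ht2⟩⟩ := hμ s
    exact ⟨⟨t2, by simpa using ht2⟩, ⟨t1, by simpa using ht1⟩⟩
  have h0s : μ.symm 0 = 0 := by conv_lhs => rw [← h0, μ.symm_apply_apply]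
  have hXs : ∀ i, μ.symm (MvPolynomial.X i) = MvPolynomial.X i := by
    intro i; conv_lhs => rw [← hX i, μ.symm_apply_apply]
  -- the induced bijection σ of P
  choose σ hσ using mu_const μ hμ h0 hX
  choose σ' hσ' using mu_const μ.symm hμs h0s hXs
  have hσ'σ : ∀ c, σ' (σ c) = c := by
    intro c
    apply MvPolynomial.C_injective (Fin n) P
    rw [← hσ' (σ c), ← hσ c, μ.symm_apply_apply]
  have hσσ' : ∀ c, σ (σ' c) = c := by
    intro c
    apply MvPolynomial.C_injective (Fin n) P
    rw [← hσ (σ' c), ← hσ' c, μ.apply_symm_apply]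
  have hσ0 : σ 0 = 0 := by
    apply MvPolynomial.C_injective (Fin n) P
    rw [← hσ 0]; simpa using h0
  have hσ1 : σ 1 = 1 := by
    apply MvPolynomial.C_injective (Fin n) P
    rw [← hσ 1]; simpa using h1
  have hσ'0 : σ' 0 = 0 := by conv_lhs => rw [← hσ0, hσ'σ]
  -- evaluation identity
  have hev : ∀ (a : Fin n → P) (p : MvPolynomial (Fin n) P),
      σ (eval a p) = eval (fun i => σ (a i)) (μ p) := by
    intro a p
    have h := mu_key μ hμ hX (fun i => MvPolynomial.C (a i)) p
    rw [aeval_C_comp] at h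
    rw [hσ] at h
    simp only [hσ] at h
    rw [aeval_C_comp (fun i => σ (a i))] at h
    exact MvPolynomial.C_injective (Fin n) P h
  -- σ is multiplicative
  have i0 : Fin n := ⟨0, hn⟩
  -- the univariate "shadow" of μ (C e * X i0)
  set g : Fin n → Polynomial P := fun i => if i = i0 then Polynomial.X else 0 with hg
  have hmeval : ∀ (e : P) (t : P),
      Polynomial.eval t (MvPolynomial.aeval g (μ (MvPolynomial.C e * MvPolynomial.X i0)))
        = σ (e * σ' t) := by
    intro e t
    have hcomp := MvPolynomial.comp_aeval (R := P) g (Polynomial.aeval t)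
    have h2 := AlgHom.congr_fun hcomp (μ (MvPolynomial.C e * MvPolynomial.X i0))
    simp only [AlgHom.coe_comp, Function.comp_apply] at h2
    have h3 : Polynomial.eval t (MvPolynomial.aeval g (μ (MvPolynomial.C e * MvPolynomial.X i0)))
        = MvPolynomial.aeval (fun i => Polynomial.aeval t (g i))
            (μ (MvPolynomial.C e * MvPolynomial.X i0)) := by
      rw [← h2]
      exact (congrFun (Polynomial.coe_aeval_eq_eval t) _).symm
    rw [h3]
    have h4 : (fun i => Polynomial.aeval t (g i))
        = fun i => σ ((fun j => if j = i0 then σ' t else 0) i) := by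
      funext i
      by_cases hi : i = i0 <;> simp [hg, hi, hσσ', hσ0]
    rw [h4, aeval_self_eq_eval, ← hev]
    simp
  have hσmul : ∀ c d : P, σ (c * d) = σ c * σ d := by
    intro c d
    by_cases hc : c = 0
    · simp [hc, hσ0]
    · have key : ∀ mc mc' : Polynomial P,
          (∀ t, Polynomial.eval t mc = σ (c * σ' t)) →
          (∀ t, Polynomial.eval t mc' = σ (c⁻¹ * σ' t)) →
          σ (c * d) = σ c * σ d := by
        intro mc mc' hMc hMc'
        have hid : mc.comp mc' = Polynomial.X := by
          apply Polynomial.funext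
          intro t
          rw [Polynomial.eval_comp, hMc', hMc (σ (c⁻¹ * σ' t))]
          rw [hσ'σ, ← mul_assoc, mul_inv_cancel₀ hc, one_mul, hσσ']
          simp
        have hdeg : mc.natDegree = 1 := by
          have h5 := Polynomial.natDegree_comp (p := mc) (q := mc')
          rw [hid] at h5
          simp only [Polynomial.natDegree_X] at h5
          exact Nat.eq_one_of_mul_eq_one_right h5.symm
        have hdegle : mc.degree ≤ 1 := by
          have h6 := Polynomial.degree_le_natDegree (p := mc)
          rw [hdeg] at h6
          exact_mod_cast h6
        have hc0 : mc.coeff 0 = 0 := by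
          rw [Polynomial.coeff_zero_eq_eval_zero, hMc 0, hσ'0, mul_zero, hσ0]
        have hlin : ∀ t, Polynomial.eval t mc = mc.coeff 1 * t := by
          intro t
          conv_lhs => rw [Polynomial.eq_X_add_C_of_degree_le_one hdegle]
          simp [hc0]
        have hα : ∀ t, σ (c * σ' t) = mc.coeff 1 * t := by
          intro t
          rw [← hMc t, hlin t]
        have hαval : mc.coeff 1 = σ c := by
          have h7 := hα (σ 1)
          rw [hσ'σ, mul_one] at h7
          rw [h7, hσ1, mul_one]
        have h8 := hα (σ d)
        rw [hσ'σ, hαval] at h8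
        exact h8
      exact key _ _ (hmeval c) (hmeval c⁻¹)
  -- conclude by function extensionality
  intro u v
  apply MvPolynomial.funext
  intro s
  have hfix : (fun i => σ (σ' (s i))) = s := by funext i; rw [hσσ']
  have ha : ∀ p, MvPolynomial.eval s (μ p)
      = σ (MvPolynomial.eval (fun i => σ' (s i)) p) := by
    intro p
    rw [hev (fun i => σ' (s i)) p, hfix]
  rw [map_mul (MvPolynomial.eval s) (μ u) (μ v), ha (u * v), ha u, ha v,
    map_mul (MvPolynomial.eval fun i => σ' (s i)) u v, hσmul]
end

section
/- Let P be an algebraically closed field, n ≥ 1, and A = P[x_1,…,x_n]. Let μ : A → A be a bijection generating an automorphism of End(A) with μ(0) = 0, μ(1) = 1, and μ(x_i) = x_i for all i. Then for every a ∈ P the image μ(x_1 + a) is an affine polynomial in x_1: there exist c, d ∈ P with c ≠ 0 such that μ(x_1 + a) = c·x_1 + d. -/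
/-- With μ as in Lemma 3.2 of the paper, for every a ∈ P the
image μ(x_1 + a) is an affine polynomial c·x_1 + d with c ≠ 0. -/
theorem mu_of_x1_plus_const_affine {P : Type*} [Field P] [IsAlgClosed P]
    (n : ℕ) (hn : 1 ≤ n)
    (μ : MvPolynomial (Fin n) P ≃ MvPolynomial (Fin n) P)
    (hμ : GeneratesAut μ)
    (h0 : μ 0 = 0) (h1 : μ 1 = 1)
    (hX : ∀ i : Fin n, μ (MvPolynomial.X i) = MvPolynomial.X i) :
    ∀ a : P, ∃ c d : P, c ≠ 0 ∧
      μ (MvPolynomial.X ⟨0, by omega⟩ + MvPolynomial.C a) =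
        MvPolynomial.C c * MvPolynomial.X ⟨0, by omega⟩ + MvPolynomial.C d := by
  intro a
  classical
  open MvPolynomial in
  set i0 : Fin n := ⟨0, by omega⟩ with hi0
  set x : MvPolynomial (Fin n) P := MvPolynomial.X i0 with hx
  -- the shift endomorphism s : X_0 ↦ X_0 + a, and the "kill other variables" endomorphism e
  set sA : MvPolynomial (Fin n) P →ₐ[P] MvPolynomial (Fin n) P :=
    MvPolynomial.aeval (fun i => if i = i0 then x + MvPolynomial.C a else MvPolynomial.X i)
    with hsA
  set e : MvPolynomial (Fin n) P →ₐ[P] MvPolynomial (Fin n) P :=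
    MvPolynomial.aeval (fun i => if i = i0 then x else 0) with he
  obtain ⟨⟨t, ht⟩, -⟩ := hμ sA
  obtain ⟨⟨tE, htE⟩, -⟩ := hμ e
  set q : MvPolynomial (Fin n) P := μ (x + MvPolynomial.C a) with hq
  set q' : MvPolynomial (Fin n) P := μ (x - MvPolynomial.C a) with hq'
  have hsq : μ.symm q = x + MvPolynomial.C a := μ.symm_apply_apply _
  have hsq' : μ.symm q' = x - MvPolynomial.C a := μ.symm_apply_apply _
  have hsymmX : ∀ i, μ.symm (MvPolynomial.X i) = MvPolynomial.X i := fun i =>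
    μ.symm_apply_eq.mpr (hX i).symm
  -- e fixes x and constants
  have hex : e x = x := by simp [he, hx]
  have heC : ∀ b : P, e (MvPolynomial.C b) = MvPolynomial.C b := fun b => by
    simp [he, MvPolynomial.algebraMap_eq]
  -- tE = e, and q, q' are fixed by e
  have htEe : tE = e := by
    apply MvPolynomial.algHom_ext
    intro i
    have h := congrFun htE (MvPolynomial.X i)
    simp only [Function.comp_apply] at h
    rw [h, hsymmX i]
    by_cases hii : i = i0
    · subst hii
      have he1 : e (MvPolynomial.X i0) = x := by simp [he]
      rw [he1, hx, hX i0]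
    · have he2 : e (MvPolynomial.X i) = 0 := by simp [he, hii]
      rw [he2, h0]
  have heq : e q = q := by
    rw [← htEe]
    have := congrFun htE q
    simp only [Function.comp_apply] at this
    rw [this, hsq, map_add, hex, heC]
  have heq' : e q' = q' := by
    rw [← htEe]
    have := congrFun htE q'
    simp only [Function.comp_apply] at this
    rw [this, hsq', map_sub, hex, heC]
  -- t sends x to q and q' to x
  have htx : t x = q := by
    have := congrFun ht x
    simp only [Function.comp_apply] at this
    rw [this, hx, hsymmX i0]
    congr 1
    simp [hsA, hx]
  have htq' : t q' = x := by
    have := congrFun ht q'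
    simp only [Function.comp_apply] at this
    rw [this, hsq']
    have : sA (x - MvPolynomial.C a) = x := by
      simp [hsA, hx, MvPolynomial.algebraMap_eq]
    rw [this, hx, hX i0]
  -- pass to one variable
  set φ : MvPolynomial (Fin n) P →ₐ[P] Polynomial P :=
    MvPolynomial.aeval (fun i => if i = i0 then Polynomial.X else 0) with hφ
  set ψ : Polynomial P →ₐ[P] MvPolynomial (Fin n) P := Polynomial.aeval x with hψ
  have hψφ : ψ.comp φ = e := by
    apply MvPolynomial.algHom_ext
    intro i
    by_cases h : i = i0 <;> simp [hφ, hψ, he, h]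
  set Q : Polynomial P := φ q with hQ
  set Q' : Polynomial P := φ q' with hQ'
  have hqQ : Polynomial.aeval x Q = q := by
    have := congrArg (fun f : MvPolynomial (Fin n) P →ₐ[P] MvPolynomial (Fin n) P => f q) hψφ
    simpa [hψ, hQ] using this.trans heq
  have hqQ' : Polynomial.aeval x Q' = q' := by
    have := congrArg (fun f : MvPolynomial (Fin n) P →ₐ[P] MvPolynomial (Fin n) P => f q') hψφ
    simpa [hψ, hQ'] using this.trans heq'
  -- composition identity : aeval q Q' = x
  have hkey : Polynomial.aeval q Q' = x := by
    have h2 : t q' = Polynomial.aeval (t x) Q' := by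
      conv_lhs => rw [← hqQ']
      exact (Polynomial.aeval_algHom_apply t x Q').symm
    rw [htq', htx] at h2
    exact h2.symm
  -- apply φ : Q'.comp Q = X
  have hφx : φ x = Polynomial.X := by simp [hφ, hx]
  have hcomp : Q'.comp Q = Polynomial.X := by
    have h3 : φ (Polynomial.aeval q Q') = Polynomial.aeval (φ q) Q' :=
      (Polynomial.aeval_algHom_apply φ q Q').symm
    rw [hkey, hφx] at h3
    rw [Polynomial.comp_eq_aeval]
    exact h3.symm
  -- degrees
  have hdeg : Q'.natDegree * Q.natDegree = 1 := by
    rw [← Polynomial.natDegree_comp, hcomp, Polynomial.natDegree_X]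
  have hdQ : Q.natDegree = 1 := Nat.eq_one_of_mul_eq_one_left hdeg
  have hQne : Q ≠ 0 := fun h => by simp [h] at hdQ
  have hc : Q.coeff 1 ≠ 0 := by
    have := Polynomial.leadingCoeff_ne_zero.mpr hQne
    rwa [Polynomial.leadingCoeff, hdQ] at this
  refine ⟨Q.coeff 1, Q.coeff 0, hc, ?_⟩
  have hQform : Q = Polynomial.C (Q.coeff 1) * Polynomial.X + Polynomial.C (Q.coeff 0) :=
    Polynomial.eq_X_add_C_of_natDegree_le_one (by omega)
  calc μ (MvPolynomial.X i0 + MvPolynomial.C a) = q := rfl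
    _ = Polynomial.aeval x Q := hqQ.symm
    _ = MvPolynomial.C (Q.coeff 1) * x + MvPolynomial.C (Q.coeff 0) := by
        rw [hQform]
        simp [MvPolynomial.algebraMap_eq]
end

section
/- Let P be an algebraically closed field, n ≥ 1, and A = P[x_1,…,x_n]. Let μ : A → A be a bijection generating an automorphism of End(A) and suppose μ(0) = 0, μ(1) = 1, and μ(x_i) = x_i for all i = 1,…,n. Then μ is additive: μ(u + v) = μ(u) + μ(v) for all u, v ∈ A. -/
namespace MuAdd

open MvPolynomial

variable {P : Type*} [Field P] {n : ℕ}
  (μ : MvPolynomial (Fin n) P ≃ MvPolynomial (Fin n) P)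

theorem hXs (hX : ∀ i, μ (X i) = X i) (i : Fin n) : μ.symm (X i) = X i := by
  conv_lhs => rw [← hX i]
  exact μ.symm_apply_apply _

theorem star (hμ : GeneratesAut μ) (hX : ∀ i, μ (X i) = X i)
    (a : Fin n → MvPolynomial (Fin n) P) (p : MvPolynomial (Fin n) P) :
    μ (aeval a p) = aeval (fun i => μ (a i)) (μ p) := by
  obtain ⟨t, ht⟩ := (hμ (aeval a)).1
  have ht2 : t = aeval (fun i => μ (a i)) := by
    apply algHom_ext
    intro i
    have h := congrFun ht (X i)
    simp only [Function.comp_apply] at h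
    rw [h, hXs μ hX i, aeval_X, aeval_X]
  have h := congrFun ht (μ p)
  simp only [Function.comp_apply, Equiv.symm_apply_apply] at h
  rw [← h, ht2]

theorem star' (hμ : GeneratesAut μ) (hX : ∀ i, μ (X i) = X i)
    (a : Fin n → MvPolynomial (Fin n) P) (p : MvPolynomial (Fin n) P) :
    μ.symm (aeval a p) = aeval (fun i => μ.symm (a i)) (μ.symm p) := by
  obtain ⟨t, ht⟩ := (hμ (aeval a)).2
  have ht2 : t = aeval (fun i => μ.symm (a i)) := by
    apply algHom_ext
    intro i
    have h := congrFun ht (X i)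
    simp only [Function.comp_apply] at h
    rw [h, hX i, aeval_X, aeval_X]
  have h := congrFun ht (μ.symm p)
  simp only [Function.comp_apply, Equiv.apply_symm_apply] at h
  rw [← h, ht2]

/-- the map induced on constants -/
noncomputable def sig (c : P) : P := constantCoeff (μ (C c))

theorem hC (hμ : GeneratesAut μ) (hX : ∀ i, μ (X i) = X i) (h0 : μ 0 = 0) (c : P) :
    μ (C c) = C (sig μ c) := by
  have h := star μ hμ hX (fun _ => 0) (C c)
  rw [aeval_C] at h
  simp only [h0] at h
  rw [aeval_zero'] at h
  rw [MvPolynomial.algebraMap_eq] at h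
  exact h

/-- the inverse map on constants -/
noncomputable def sig' (c : P) : P := constantCoeff (μ.symm (C c))

theorem hC' (hμ : GeneratesAut μ) (hX : ∀ i, μ (X i) = X i) (h0 : μ 0 = 0) (c : P) :
    μ.symm (C c) = C (sig' μ c) := by
  have h0' : μ.symm 0 = 0 := by
    conv_lhs => rw [← h0]
    exact μ.symm_apply_apply _
  have h := star' μ hμ hX (fun _ => 0) (C c)
  rw [aeval_C] at h
  simp only [h0'] at h
  rw [aeval_zero'] at h
  rw [MvPolynomial.algebraMap_eq] at h
  exact h

theorem sig_sig' (hμ : GeneratesAut μ) (hX : ∀ i, μ (X i) = X i) (h0 : μ 0 = 0) (c : P) :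
    sig μ (sig' μ c) = c := by
  have h : μ (C (sig' μ c)) = C c := by
    rw [← hC' μ hμ hX h0 c, μ.apply_symm_apply]
  rw [hC μ hμ hX h0] at h
  exact C_injective _ _ h

theorem sig'_sig (hμ : GeneratesAut μ) (hX : ∀ i, μ (X i) = X i) (h0 : μ 0 = 0) (c : P) :
    sig' μ (sig μ c) = c := by
  have h : μ.symm (C (sig μ c)) = C c := by
    rw [← hC μ hμ hX h0 c, μ.symm_apply_apply]
  rw [hC' μ hμ hX h0] at h
  exact C_injective _ _ h

theorem evalKey (hμ : GeneratesAut μ) (hX : ∀ i, μ (X i) = X i) (h0 : μ 0 = 0)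
    (c : Fin n → P) (p : MvPolynomial (Fin n) P) :
    eval (fun i => sig μ (c i)) (μ p) = sig μ (eval c p) := by
  have h := star μ hμ hX (fun i => C (c i)) p
  have hl : (aeval (fun i => C (c i)) p : MvPolynomial (Fin n) P) = C (eval c p) := by
    have h2 := comp_aeval_apply (f := c) (Algebra.ofId P (MvPolynomial (Fin n) P)) p
    have h3 : ∀ q : MvPolynomial (Fin n) P,
        (Algebra.ofId P (MvPolynomial (Fin n) P)) (aeval c q) = C (aeval c q) := fun _ => rfl
    rw [h3] at h2
    have h4 : aeval c p = eval c p := by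
      rw [aeval_def, eval]
      rfl
    rw [h4] at h2
    exact h2.symm
  rw [hl, hC μ hμ hX h0] at h
  simp only [hC μ hμ hX h0] at h
  have hr : (aeval (fun i => C (sig μ (c i))) (μ p) : MvPolynomial (Fin n) P)
      = C (eval (fun i => sig μ (c i)) (μ p)) := by
    have h2 := comp_aeval_apply (f := fun i => sig μ (c i))
      (Algebra.ofId P (MvPolynomial (Fin n) P)) (μ p)
    have h4 : aeval (fun i => sig μ (c i)) (μ p) = eval (fun i => sig μ (c i)) (μ p) := by
      rw [aeval_def, eval]
      rfl
    rw [h4] at h2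
    exact h2.symm
  rw [hr] at h
  exact (C_injective _ _ h.symm)

theorem aeval_eq_eval'' (c : Fin n → P) (p : MvPolynomial (Fin n) P) :
    aeval c p = eval c p := by
  rw [aeval_def, eval]
  rfl

variable (n) in
/-- embedding of univariate polynomials via the variable `i0` -/
noncomputable def psi (i0 : Fin n) : Polynomial P →ₐ[P] MvPolynomial (Fin n) P :=
  Polynomial.aeval (X i0)

variable (n) in
/-- projection to univariate polynomials, killing other variables -/
noncomputable def phi (i0 : Fin n) : MvPolynomial (Fin n) P →ₐ[P] Polynomial P :=
  aeval (fun j => if j = i0 then Polynomial.X else 0)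

theorem psi_apply {i0 : Fin n} (Z : Polynomial P) :
    psi n i0 Z = Polynomial.aeval (X i0) Z := rfl

theorem phi_apply {i0 : Fin n} (r : MvPolynomial (Fin n) P) :
    phi n i0 r = aeval (fun j => if j = i0 then Polynomial.X else 0) r := rfl

theorem algHom_psi {i0 : Fin n} {B : Type*} [CommSemiring B] [Algebra P B]
    (f : MvPolynomial (Fin n) P →ₐ[P] B) (Z : Polynomial P) :
    f (psi n i0 Z) = Polynomial.aeval (f (X i0)) Z :=
  (Polynomial.aeval_algHom_apply f (X i0) Z).symm

theorem phi_X {i0 : Fin n} : phi n i0 (X i0) = (Polynomial.X : Polynomial P) := by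
  rw [phi_apply, aeval_X]
  simp

theorem phi_psi {i0 : Fin n} (Z : Polynomial P) : phi n i0 (psi n i0 Z) = Z := by
  rw [algHom_psi, phi_X, Polynomial.aeval_X_left_apply]

theorem psi_eval {i0 : Fin n} (Z : Polynomial P) (c : Fin n → P) :
    eval c (psi n i0 Z) = Z.eval (c i0) := by
  rw [← aeval_eq_eval'',
    algHom_psi (aeval c : MvPolynomial (Fin n) P →ₐ[P] P) Z, aeval_X]
  exact congrFun (Polynomial.coe_aeval_eq_eval (c i0)) Z

theorem key [IsAlgClosed P] (hμ : GeneratesAut μ) (hX : ∀ i, μ (X i) = X i) (h0 : μ 0 = 0)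
    (i0 : Fin n) (W W' : Polynomial P)
    (hWW' : W.comp W' = Polynomial.X) (hW'W : W'.comp W = Polynomial.X) :
    ∃ α β : P, ∀ x : P, sig μ (Polynomial.eval x W) = α * sig μ x + β := by
  have hτcomp : ∀ (U V : Polynomial P), V.comp U = Polynomial.X →
      ∀ x : MvPolynomial (Fin n) P,
      (aeval (fun j => if j = i0 then psi n i0 U else X j))
        ((aeval (fun j => if j = i0 then psi n i0 V else X j)) x) = x := by
    intro U V hUV
    have hcomp : (aeval (fun j => if j = i0 then psi n i0 U else X j) :
          MvPolynomial (Fin n) P →ₐ[P] MvPolynomial (Fin n) P).comp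
        (aeval (fun j => if j = i0 then psi n i0 V else X j))
        = AlgHom.id P (MvPolynomial (Fin n) P) := by
      apply algHom_ext
      intro i
      rw [AlgHom.comp_apply, aeval_X, AlgHom.id_apply]
      by_cases hi : i = i0
      · rw [hi, if_pos rfl, algHom_psi, aeval_X, if_pos rfl]
        have h2 : psi n i0 (V.comp U) = Polynomial.aeval (psi n i0 U) V := by
          rw [psi_apply, psi_apply, Polynomial.aeval_comp]
        rw [← h2, hUV, psi_apply, Polynomial.aeval_X]
      · rw [if_neg hi, aeval_X, if_neg hi]
    intro x
    exact AlgHom.congr_fun hcomp x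
  obtain ⟨t, ht⟩ := (hμ (aeval (fun j => if j = i0 then psi n i0 W else X j))).1
  obtain ⟨t', ht'⟩ := (hμ (aeval (fun j => if j = i0 then psi n i0 W' else X j))).1
  have htX : t (X i0) = μ (psi n i0 W) := by
    have h := congrFun ht (X i0)
    simp only [Function.comp_apply] at h
    rw [h, hXs μ hX, aeval_X, if_pos rfl]
  have ht'X : t' (X i0) = μ (psi n i0 W') := by
    have h := congrFun ht' (X i0)
    simp only [Function.comp_apply] at h
    rw [h, hXs μ hX, aeval_X, if_pos rfl]
  have htt' : ∀ x, t (t' x) = x := by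
    intro x
    have h1 := congrFun ht' x
    have h2 := congrFun ht (t' x)
    simp only [Function.comp_apply] at h1 h2
    rw [h2, h1, Equiv.symm_apply_apply, hτcomp W W' hW'W, Equiv.apply_symm_apply]
  have ht't : ∀ x, t' (t x) = x := by
    intro x
    have h1 := congrFun ht x
    have h2 := congrFun ht' (t x)
    simp only [Function.comp_apply] at h1 h2
    rw [h2, h1, Equiv.symm_apply_apply, hτcomp W' W hWW', Equiv.apply_symm_apply]
  -- evaluation of μ (psi Z)
  have hqe : ∀ (Z : Polynomial P) (d : Fin n → P),
      eval d (μ (psi n i0 Z)) = sig μ (Z.eval (sig' μ (d i0))) := by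
    intro Z d
    have h := evalKey μ hμ hX h0 (fun i => sig' μ (d i)) (psi n i0 Z)
    have hfun : (fun i => sig μ (sig' μ (d i))) = d := by
      funext i; exact sig_sig' μ hμ hX h0 (d i)
    rw [hfun] at h
    rw [h, psi_eval]
  -- μ (psi Z) depends only on X i0
  have hφeval : ∀ (r : MvPolynomial (Fin n) P) (e : P), Polynomial.eval e (phi n i0 r)
      = eval (fun j => if j = i0 then e else 0) r := by
    intro r e
    have h1 : Polynomial.eval e (phi n i0 r)
        = (Polynomial.aeval e : Polynomial P →ₐ[P] P) (phi n i0 r) :=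
      (congrFun (Polynomial.coe_aeval_eq_eval e) _).symm
    have hfun : (fun i => (Polynomial.aeval e) (if i = i0 then Polynomial.X else (0 : Polynomial P)))
        = fun j => if j = i0 then (e : P) else 0 := by
      funext j
      by_cases hj : j = i0 <;> simp [hj]
    rw [h1, phi_apply, comp_aeval_apply, hfun, aeval_eq_eval'']
  have hdep : ∀ Z : Polynomial P, μ (psi n i0 Z) = psi n i0 (phi n i0 (μ (psi n i0 Z))) := by
    intro Z
    apply MvPolynomial.funext
    intro d
    rw [hqe Z d, psi_eval, hφeval, hqe Z]
    simp
  set Q := phi n i0 (μ (psi n i0 W)) with hQdef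
  set Q' := phi n i0 (μ (psi n i0 W')) with hQ'def
  -- composition identities at the univariate level
  have hXi0 : (X i0 : MvPolynomial (Fin n) P) = Polynomial.aeval (μ (psi n i0 W)) Q' := by
    have h := htt' (X i0)
    rw [ht'X, hdep W', algHom_psi, htX] at h
    exact h.symm
  have hXi0' : (X i0 : MvPolynomial (Fin n) P) = Polynomial.aeval (μ (psi n i0 W')) Q := by
    have h := ht't (X i0)
    rw [htX, hdep W, algHom_psi, ht'X] at h
    exact h.symm
  have hcomp1 : Q'.comp Q = Polynomial.X := by
    have h := congrArg (phi n i0) hXi0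
    rw [phi_X, ← Polynomial.aeval_algHom_apply (phi n i0) (μ (psi n i0 W)) Q', ← hQdef] at h
    rw [Polynomial.comp_eq_aeval]
    exact h.symm
  have hdeg : Q.natDegree = 1 := by
    have h := congrArg Polynomial.natDegree hcomp1
    rw [Polynomial.natDegree_comp, Polynomial.natDegree_X] at h
    exact Nat.eq_one_of_mul_eq_one_left h
  refine ⟨Q.coeff 1, Q.coeff 0, fun x => ?_⟩
  have e1 : eval (fun _ => sig μ x) (μ (psi n i0 W)) = sig μ (W.eval x) := by
    rw [hqe W, sig'_sig μ hμ hX h0]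
  have e2 : eval (fun _ : Fin n => sig μ x) (μ (psi n i0 W))
      = Q.coeff 1 * sig μ x + Q.coeff 0 := by
    conv_lhs => rw [hdep W, ← hQdef]
    rw [psi_eval]
    conv_lhs => rw [Polynomial.eq_X_add_C_of_natDegree_le_one hdeg.le]
    simp
  rw [← e1, e2]

theorem sig0 (hμ : GeneratesAut μ) (hX : ∀ i, μ (X i) = X i) (h0 : μ 0 = 0) :
    sig μ (0 : P) = 0 := by
  have h := hC μ hμ hX h0 (0 : P)
  rw [map_zero, h0] at h
  exact (C_injective _ _ (h.symm.trans (map_zero C).symm))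

theorem sig1 (hμ : GeneratesAut μ) (hX : ∀ i, μ (X i) = X i) (h0 : μ 0 = 0) (h1 : μ 1 = 1) :
    sig μ (1 : P) = 1 := by
  have h := hC μ hμ hX h0 (1 : P)
  rw [map_one, h1] at h
  exact (C_injective _ _ (h.symm.trans (map_one C).symm))

theorem sig_inj (hμ : GeneratesAut μ) (hX : ∀ i, μ (X i) = X i) (h0 : μ 0 = 0)
    {a b : P} (h : sig μ a = sig μ b) : a = b := by
  rw [← sig'_sig μ hμ hX h0 a, h, sig'_sig μ hμ hX h0]

theorem sig_add [IsAlgClosed P] (hn : 1 ≤ n) (hμ : GeneratesAut μ)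
    (hX : ∀ i, μ (X i) = X i) (h0 : μ 0 = 0) (h1 : μ 1 = 1) :
    ∀ x a : P, sig μ (x + a) = sig μ x + sig μ a := by
  set i0 : Fin n := ⟨0, hn⟩
  have hσ0 := sig0 μ hμ hX h0
  have hσ1 := sig1 μ hμ hX h0 h1
  have hσne : ∀ a : P, a ≠ 0 → sig μ a ≠ 0 := by
    intro a ha h
    exact ha (sig_inj μ hμ hX h0 (h.trans hσ0.symm))
  -- translations
  have Hadd : ∀ a : P, ∃ α : P, ∀ x : P, sig μ (x + a) = α * sig μ x + sig μ a := by
    intro a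
    obtain ⟨α, β, h⟩ := key μ hμ hX h0 i0 (Polynomial.X + Polynomial.C a)
      (Polynomial.X - Polynomial.C a)
      (by simp [Polynomial.add_comp, Polynomial.sub_comp])
      (by simp [Polynomial.add_comp, Polynomial.sub_comp])
    simp only [Polynomial.eval_add, Polynomial.eval_X, Polynomial.eval_C] at h
    have hβ : β = sig μ a := by
      have h0' := h 0
      rw [zero_add, hσ0, mul_zero, zero_add] at h0'
      exact h0'.symm
    exact ⟨α, fun x => by rw [h x, hβ]⟩
  -- scalings
  have Hmul : ∀ a x : P, sig μ (a * x) = sig μ a * sig μ x := by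
    intro a x
    by_cases ha : a = 0
    · rw [ha, zero_mul, hσ0, zero_mul]
    obtain ⟨α, β, h⟩ := key μ hμ hX h0 i0 (Polynomial.C a * Polynomial.X)
      (Polynomial.C a⁻¹ * Polynomial.X)
      (by
        rw [Polynomial.mul_comp, Polynomial.C_comp, Polynomial.X_comp, ← mul_assoc,
          ← Polynomial.C_mul, mul_inv_cancel₀ ha, Polynomial.C_1, one_mul])
      (by
        rw [Polynomial.mul_comp, Polynomial.C_comp, Polynomial.X_comp, ← mul_assoc,
          ← Polynomial.C_mul, inv_mul_cancel₀ ha, Polynomial.C_1, one_mul])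
    simp only [Polynomial.eval_mul, Polynomial.eval_X, Polynomial.eval_C] at h
    have hβ : β = 0 := by
      have h0' := h 0
      rw [mul_zero, hσ0, mul_zero, zero_add] at h0'
      exact h0'.symm
    have hα : α = sig μ a := by
      have h1' := h 1
      rw [mul_one, hσ1, mul_one, hβ, add_zero] at h1'
      exact h1'.symm
    rw [h x, hβ, hα, add_zero]
  choose αf hα using Hadd
  have hk0 : αf 0 = 1 := by
    have h := hα 0 1
    rw [add_zero, hσ1, hσ0, mul_one, add_zero] at h
    exact h.symm
  have hscale : ∀ lam a : P, lam ≠ 0 → αf (lam * a) = αf a := by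
    intro lam a hlam
    have e1 : sig μ (lam * (1 + a)) = sig μ lam * (αf a * 1 + sig μ a) := by
      rw [Hmul, hα, hσ1]
    have e2 : sig μ (lam * (1 + a)) = αf (lam * a) * sig μ lam + sig μ lam * sig μ a := by
      rw [mul_add, mul_one, hα (lam * a) lam, Hmul]
    have e := e1.symm.trans e2
    have e3 : αf (lam * a) * sig μ lam = αf a * sig μ lam := by
      linear_combination -e
    exact (mul_right_cancel₀ (hσne lam hlam) e3)
  have hgroup : ∀ a b : P, αf (a + b) = αf a * αf b := by
    intro a b
    have hx0 := hα b a
    have e1 := hα (a + b) 1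
    have e2 : sig μ (1 + (a + b)) = αf b * sig μ (1 + a) + sig μ b := by
      rw [← add_assoc]; exact hα b (1 + a)
    have e3 := hα a 1
    rw [hσ1] at e1 e3
    linear_combination -e1 + e2 + αf b * e3 - hx0
  have hk1 : αf 1 = 1 := by
    have hk1ne : αf 1 ≠ 0 := by
      intro hz
      have ha1 := hα 1 1
      rw [hz, zero_mul, zero_add] at ha1
      have h21 : (1 + 1 : P) = 1 := sig_inj μ hμ hX h0 ha1
      exact one_ne_zero (by linear_combination h21 : (1 : P) = 0)
    by_cases h2 : (2 : P) = 0
    · have hg := hgroup 1 1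
      have h11 : (1 : P) + 1 = 0 := by linear_combination h2
      rw [h11, hk0] at hg
      have hz : (αf 1 - 1) ^ 2 = 0 := by linear_combination -hg + (1 - αf 1) * h2
      have := pow_eq_zero_iff (two_ne_zero) |>.mp hz
      exact sub_eq_zero.mp this
    · have hs : αf 2 = αf 1 := by
        have := hscale 2 1 h2
        rwa [mul_one] at this
      have hg : αf 2 = αf 1 * αf 1 := by
        rw [show (2 : P) = 1 + 1 by norm_num]
        exact hgroup 1 1
      have e : αf 1 * 1 = αf 1 * αf 1 := by rw [mul_one]; exact hs.symm.trans hg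
      exact (mul_left_cancel₀ hk1ne e).symm
  have hαall : ∀ a : P, αf a = 1 := by
    intro a
    by_cases ha : a = 0
    · rw [ha, hk0]
    · have h := hscale a 1 ha
      rw [mul_one] at h
      rw [h, hk1]
  intro x a
  rw [hα a x, hαall, one_mul]

end MuAdd

/-- Lemma 3.2: Over an algebraically closed field, a bijection
generating an automorphism of End(P[X]) with μ(0)=0, μ(1)=1, μ(x_i)=x_i
is additive. -/
theorem mu_additive {P : Type*} [Field P] [IsAlgClosed P]
    (n : ℕ) (hn : 1 ≤ n)
    (μ : MvPolynomial (Fin n) P ≃ MvPolynomial (Fin n) P)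
    (hμ : GeneratesAut μ)
    (h0 : μ 0 = 0) (h1 : μ 1 = 1)
    (hX : ∀ i : Fin n, μ (MvPolynomial.X i) = MvPolynomial.X i) :
    ∀ u v : MvPolynomial (Fin n) P, μ (u + v) = μ u + μ v := by
  classical
  open MvPolynomial MuAdd in
  intro u v
  apply MvPolynomial.funext
  intro d
  have hfun : (fun i => sig μ (sig' μ (d i))) = d :=
    funext fun i => sig_sig' μ hμ hX h0 (d i)
  have E : ∀ p : MvPolynomial (Fin n) P,
      eval d (μ p) = sig μ (eval (fun i => sig' μ (d i)) p) := by
    intro p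
    have h := evalKey μ hμ hX h0 (fun i => sig' μ (d i)) p
    rw [hfun] at h
    exact h
  have hsplit : MvPolynomial.eval d (μ u + μ v)
      = MvPolynomial.eval d (μ u) + MvPolynomial.eval d (μ v) := map_add _ _ _
  rw [hsplit, E (u + v), E u, E v, map_add]
  exact sig_add μ hn hμ hX h0 h1 _ _
end

section
/- Let P be an algebraically closed field, n ≥ 1, and A = P[x_1,…,x_n]. Let μ : A → A be a bijection generating an automorphism of End(A) with μ(0) = 0, μ(1) = 1, and μ(x_i) = x_i for all i. Then the restriction of μ to the constants is a field automorphism of P: μ maps P bijectively onto P and satisfies μ(a + b) = μ(a) + μ(b) and μ(a·b) = μ(a)·μ(b) for all a, b ∈ P. -/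
open Polynomial in
theorem univar_alpha {P : Type*} [Field P] [Infinite P]
    (ν : Polynomial P → Polynomial P)
    (hcomp : ∀ f g : Polynomial P, ν (g.comp f) = (ν g).comp (ν f))
    (hXX : ν Polynomial.X = Polynomial.X)
    (α : P → P)
    (hC : ∀ a, ν (Polynomial.C a) = Polynomial.C (α a))
    (hα0 : α 0 = 0) (hα1 : α 1 = 1) :
    (∀ a b, α (a * b) = α a * α b) ∧ (∀ a b, α (a + b) = α a + α b) := by
  have heval : ∀ (f : P[X]) (a : P), α (f.eval a) = (ν f).eval (α a) := by
    intro f a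
    have h := hcomp (C a) f
    rw [comp_C, hC, hC, comp_C] at h
    exact C_injective h
  have hunit : ∀ f g : P[X], f.comp g = X → g.comp f = X →
      ν f = C ((ν f).coeff 1) * X + C ((ν f).coeff 0) ∧ (ν f).coeff 1 ≠ 0 := by
    intro f g h1 h2
    have hfg : (ν f).comp (ν g) = X := by rw [← hcomp g f, h1, hXX]
    have hdeg : (ν f).natDegree * (ν g).natDegree = 1 := by
      rw [← natDegree_comp, hfg, natDegree_X]
    have hdf : (ν f).natDegree = 1 := Nat.eq_one_of_mul_eq_one_right hdeg
    refine ⟨eq_X_add_C_of_natDegree_le_one hdf.le, ?_⟩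
    have hne : ν f ≠ 0 := fun h => by simp [h] at hdf
    have hl := leadingCoeff_ne_zero.mpr hne
    rwa [leadingCoeff, hdf] at hl
  -- multiplicativity
  have hMb : ∀ b : P, b ≠ 0 → ν (C b * X) = C (α b) * X := by
    intro b hb
    have h1 : (C b * X).comp (C b⁻¹ * X) = X := by
      rw [mul_comp, C_comp, X_comp, ← mul_assoc, ← C_mul, mul_inv_cancel₀ hb, C_1, one_mul]
    have h2 : (C b⁻¹ * X).comp (C b * X) = X := by
      rw [mul_comp, C_comp, X_comp, ← mul_assoc, ← C_mul, inv_mul_cancel₀ hb, C_1, one_mul]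
    obtain ⟨hf, hc⟩ := hunit (C b * X) (C b⁻¹ * X) h1 h2
    have e0 := heval (C b * X) 0
    rw [hf] at e0
    simp [hα0] at e0
    have e1 := heval (C b * X) 1
    rw [hf] at e1
    simp [hα1, ← e0] at e1
    rw [hf, ← e0, ← e1]
    simp
  have hmul : ∀ a b : P, α (a * b) = α a * α b := by
    intro a b
    rcases eq_or_ne a 0 with rfl | ha
    · simp [hα0]
    · have h := heval (C a * X) b
      rw [hMb a ha] at h
      simpa using h
  refine ⟨hmul, ?_⟩
  -- additivity
  have hTb : ∀ b : P, ν (X + C b) = C ((ν (X + C b)).coeff 1) * X + C (α b) ∧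
      (ν (X + C b)).coeff 1 ≠ 0 := by
    intro b
    have h1 : (X + C b).comp (X + C (-b)) = X := by
      rw [add_comp, X_comp, C_comp, add_assoc, ← C_add, neg_add_cancel, C_0, add_zero]
    have h2 : (X + C (-b)).comp (X + C b) = X := by
      rw [add_comp, X_comp, C_comp, add_assoc, ← C_add, add_neg_cancel, C_0, add_zero]
    obtain ⟨hf, hc⟩ := hunit (X + C b) (X + C (-b)) h1 h2
    refine ⟨?_, hc⟩
    have e0 := heval (X + C b) 0
    rw [hf] at e0
    simp [hα0] at e0
    conv_lhs => rw [hf]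
    rw [← e0]
  set c : P → P := fun b => (ν (X + C b)).coeff 1 with hcdef
  have hcoeff1 : ∀ e v : P, (C e * X + C v).coeff 1 = e := by
    intro e v; simp [coeff_C]
  have hscale : ∀ u b : P, u ≠ 0 → c (u⁻¹ * b) = c b := by
    intro u b hu
    have key : (X + C (u⁻¹ * b) : P[X]) = (C u⁻¹ * X).comp ((X + C b).comp (C u * X)) := by
      rw [add_comp, X_comp, C_comp, mul_comp, C_comp, X_comp, mul_add, ← mul_assoc,
        ← C_mul, inv_mul_cancel₀ hu, C_1, one_mul, ← C_mul]
    have h : ν (X + C (u⁻¹ * b)) = C (α u⁻¹ * (c b * α u)) * X + C (α u⁻¹ * (c b * 0 + α b)) := by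
      rw [key, hcomp, hcomp, hMb u hu, hMb u⁻¹ (inv_ne_zero hu), (hTb b).1, add_comp,
        mul_comp, C_comp, X_comp, mul_comp, C_comp, X_comp, C_comp]
      rw [C_mul, C_mul, C_mul, C_add, C_mul, C_0]
      ring
    have h2 : c (u⁻¹ * b) = α u⁻¹ * (c b * α u) := by
      show (ν (X + C (u⁻¹ * b))).coeff 1 = _
      rw [h, hcoeff1]
    rw [h2]
    calc α u⁻¹ * (c b * α u) = c b * (α u⁻¹ * α u) := by ring
      _ = c b := by rw [← hmul, inv_mul_cancel₀ hu, hα1, mul_one]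
  have hsum : ∀ b b' : P, c (b + b') = c b' * c b := by
    intro b b'
    have key : (X + C (b + b') : P[X]) = (X + C b').comp (X + C b) := by
      rw [add_comp, X_comp, C_comp, add_assoc, C_add]
    have h : ν (X + C (b + b')) = C (c b' * c b) * X + C (c b' * α b + α b') := by
      rw [key, hcomp, (hTb b).1, (hTb b').1, add_comp, mul_comp, C_comp, X_comp, C_comp]
      rw [C_mul, C_add, C_mul]
      ring
    show (ν (X + C (b + b'))).coeff 1 = _
    rw [h, hcoeff1]
  have hconst : ∀ b b' : P, b ≠ 0 → b' ≠ 0 → c b = c b' := by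
    intro b b' hb hb'
    have h := hscale (b * b'⁻¹) b (mul_ne_zero hb (inv_ne_zero hb'))
    have harg : (b * b'⁻¹)⁻¹ * b = b' := by field_simp
    rw [harg] at h
    exact h.symm
  classical
  obtain ⟨e, he⟩ := Infinite.exists_notMem_finset ({0, -1} : Finset P)
  simp only [Finset.mem_insert, Finset.mem_singleton, not_or] at he
  obtain ⟨he0, he1⟩ := he
  have h1e : (1 : P) + e ≠ 0 := by
    intro h; apply he1; linear_combination h
  have hc1 : c 1 = 1 := by
    have h1 := hsum 1 e
    rw [hconst (1 + e) 1 h1e one_ne_zero, hconst e 1 he0 one_ne_zero] at h1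
    have hcne : c 1 ≠ 0 := (hTb 1).2
    have h2 : c 1 * 1 = c 1 * c 1 := by rw [mul_one]; exact h1
    exact (mul_left_cancel₀ hcne h2).symm
  intro a b
  rcases eq_or_ne b 0 with rfl | hb
  · simp [hα0]
  · have h := heval (X + C b) a
    have hcb : (ν (X + C b)).coeff 1 = 1 := (hconst b 1 hb one_ne_zero).trans hc1
    rw [(hTb b).1, hcb] at h
    simpa using h


noncomputable def myIota {P : Type*} [Field P] {n : ℕ} (i0 : Fin n) :
    Polynomial P →ₐ[P] MvPolynomial (Fin n) P :=
  Polynomial.aeval (MvPolynomial.X i0)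

noncomputable def myPhi {P : Type*} [Field P] {n : ℕ} :
    MvPolynomial (Fin n) P →ₐ[P] Polynomial P :=
  MvPolynomial.aeval (fun _ => Polynomial.X)

lemma myIota_X {P : Type*} [Field P] {n : ℕ} (i0 : Fin n) :
    myIota i0 (Polynomial.X : Polynomial P) = MvPolynomial.X i0 := by
  simp [myIota]

lemma myIota_C {P : Type*} [Field P] {n : ℕ} (i0 : Fin n) (a : P) :
    myIota i0 (Polynomial.C a) = MvPolynomial.C a := by
  simp [myIota, MvPolynomial.algebraMap_eq]

lemma myPhi_X {P : Type*} [Field P] {n : ℕ} (i : Fin n) :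
    myPhi (MvPolynomial.X i : MvPolynomial (Fin n) P) = Polynomial.X := by
  simp [myPhi]

lemma myPhi_C {P : Type*} [Field P] {n : ℕ} (a : P) :
    myPhi (MvPolynomial.C a : MvPolynomial (Fin n) P) = Polynomial.C a := by
  simp [myPhi, MvPolynomial.algebraMap_eq, Polynomial.algebraMap_eq]

lemma myPhi_iota {P : Type*} [Field P] {n : ℕ} (i0 : Fin n) (f : Polynomial P) :
    myPhi (myIota i0 f) = f := by
  have h := (Polynomial.aeval_algHom_apply (myPhi (P := P) (n := n))
    (MvPolynomial.X i0) f).symm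
  rw [myIota, h, myPhi_X, Polynomial.aeval_X_left_apply]

lemma myIota_phi {P : Type*} [Field P] {n : ℕ} (i0 : Fin n)
    (q : MvPolynomial (Fin n) P) :
    myIota i0 (myPhi q) = MvPolynomial.aeval (fun _ => MvPolynomial.X i0) q := by
  have h : (myIota (P := P) i0).comp myPhi =
      MvPolynomial.aeval (fun _ : Fin n => MvPolynomial.X i0) := by
    apply MvPolynomial.algHom_ext
    intro i
    rw [AlgHom.comp_apply, myPhi_X, myIota_X, MvPolynomial.aeval_X]
  exact DFunLike.congr_fun h q

lemma myIota_comp {P : Type*} [Field P] {n : ℕ} (i0 : Fin n) (f g : Polynomial P) :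
    myIota i0 (g.comp f) =
      MvPolynomial.aeval (fun _ => myIota i0 f) (myIota i0 g) := by
  simp only [myIota]
  rw [Polynomial.aeval_comp]
  rw [← Polynomial.aeval_algHom_apply
    (MvPolynomial.aeval (fun _ : Fin n => Polynomial.aeval (MvPolynomial.X i0) f))
    (MvPolynomial.X i0) g]
  rw [MvPolynomial.aeval_X]

theorem mu_restricts_to_field_automorphism' {P : Type*} [Field P] [IsAlgClosed P]
    (n : ℕ) (hn : 1 ≤ n)
    (μ : MvPolynomial (Fin n) P ≃ MvPolynomial (Fin n) P)
    (hμ : ∀ s : MvPolynomial (Fin n) P →ₐ[P] MvPolynomial (Fin n) P,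
    (∃ t : MvPolynomial (Fin n) P →ₐ[P] MvPolynomial (Fin n) P,
      ⇑t = ⇑μ ∘ ⇑s ∘ ⇑μ.symm) ∧
    (∃ t : MvPolynomial (Fin n) P →ₐ[P] MvPolynomial (Fin n) P,
      ⇑t = ⇑μ.symm ∘ ⇑s ∘ ⇑μ))
    (h0 : μ 0 = 0) (h1 : μ 1 = 1)
    (hX : ∀ i : Fin n, μ (MvPolynomial.X i) = MvPolynomial.X i) :
    ∃ α : P ≃+* P, ∀ a : P, μ (MvPolynomial.C a) = MvPolynomial.C (α a) := by
  classical
  have hXs : ∀ i : Fin n, μ.symm (MvPolynomial.X i) = MvPolynomial.X i := fun i =>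
    μ.symm_apply_eq.mpr (hX i).symm
  have hs0 : μ.symm 0 = 0 := μ.symm_apply_eq.mpr h0.symm
  -- The key conjugation relation
  have hR : ∀ p q : MvPolynomial (Fin n) P,
      μ (MvPolynomial.aeval (fun _ => p) q) =
        MvPolynomial.aeval (fun _ => μ p) (μ q) := by
    intro p q
    obtain ⟨t, ht⟩ := (hμ (MvPolynomial.aeval (fun _ => p))).1
    have hts : t = MvPolynomial.aeval (fun _ => μ p) := by
      apply MvPolynomial.algHom_ext
      intro i
      have h1 : t (MvPolynomial.X i) =
          μ (MvPolynomial.aeval (fun _ => p) (μ.symm (MvPolynomial.X i))) := by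
        rw [ht]; rfl
      rw [h1, hXs i, MvPolynomial.aeval_X, MvPolynomial.aeval_X]
    have h2 : t (μ q) = μ (MvPolynomial.aeval (fun _ => p) q) := by
      rw [ht]
      show μ (MvPolynomial.aeval (fun _ => p) (μ.symm (μ q))) = _
      rw [Equiv.symm_apply_apply]
    rw [← h2, hts]
  have hR' : ∀ p q : MvPolynomial (Fin n) P,
      μ.symm (MvPolynomial.aeval (fun _ => p) q) =
        MvPolynomial.aeval (fun _ => μ.symm p) (μ.symm q) := by
    intro p q
    obtain ⟨t, ht⟩ := (hμ (MvPolynomial.aeval (fun _ => p))).2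
    have hts : t = MvPolynomial.aeval (fun _ => μ.symm p) := by
      apply MvPolynomial.algHom_ext
      intro i
      have h1 : t (MvPolynomial.X i) =
          μ.symm (MvPolynomial.aeval (fun _ => p) (μ (MvPolynomial.X i))) := by
        rw [ht]; rfl
      rw [h1, hX i, MvPolynomial.aeval_X, MvPolynomial.aeval_X]
    have h2 : t (μ.symm q) = μ.symm (MvPolynomial.aeval (fun _ => p) q) := by
      rw [ht]
      show μ.symm (MvPolynomial.aeval (fun _ => p) (μ (μ.symm q))) = _
      rw [Equiv.apply_symm_apply]
    rw [← h2, hts]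
  -- constants go to constants
  have hαc : ∀ a : P, μ (MvPolynomial.C a) =
      MvPolynomial.C (MvPolynomial.constantCoeff (μ (MvPolynomial.C a))) := by
    intro a
    have h := hR 0 (MvPolynomial.C a)
    rw [h0] at h
    rw [MvPolynomial.aeval_C, MvPolynomial.algebraMap_eq] at h
    rw [MvPolynomial.aeval_zero', MvPolynomial.algebraMap_eq] at h
    exact h
  have hβc : ∀ a : P, μ.symm (MvPolynomial.C a) =
      MvPolynomial.C (MvPolynomial.constantCoeff (μ.symm (MvPolynomial.C a))) := by
    intro a
    have h := hR' 0 (MvPolynomial.C a)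
    rw [hs0] at h
    rw [MvPolynomial.aeval_C, MvPolynomial.algebraMap_eq] at h
    rw [MvPolynomial.aeval_zero', MvPolynomial.algebraMap_eq] at h
    exact h
  set α : P → P := fun a => MvPolynomial.constantCoeff (μ (MvPolynomial.C a)) with hαdef
  set β : P → P := fun a => MvPolynomial.constantCoeff (μ.symm (MvPolynomial.C a)) with hβdef
  have hβα : ∀ a, β (α a) = a := by
    intro a
    apply MvPolynomial.C_injective (Fin n) P
    show MvPolynomial.C (MvPolynomial.constantCoeff
      (μ.symm (MvPolynomial.C (MvPolynomial.constantCoeff (μ (MvPolynomial.C a)))))) = _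
    rw [← hβc, ← hαc, Equiv.symm_apply_apply]
  have hαβ : ∀ a, α (β a) = a := by
    intro a
    apply MvPolynomial.C_injective (Fin n) P
    show MvPolynomial.C (MvPolynomial.constantCoeff
      (μ (MvPolynomial.C (MvPolynomial.constantCoeff (μ.symm (MvPolynomial.C a)))))) = _
    rw [← hαc, ← hβc, Equiv.apply_symm_apply]
  have hμC0 : μ (MvPolynomial.C (0 : P)) = MvPolynomial.C (0 : P) := by
    rw [MvPolynomial.C_0, h0]
  have hμC1 : μ (MvPolynomial.C (1 : P)) = MvPolynomial.C (1 : P) := by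
    rw [MvPolynomial.C_1, h1]
  have hα0 : α 0 = 0 :=
    MvPolynomial.C_injective _ _ (((hαc 0).symm.trans hμC0))
  have hα1 : α 1 = 1 :=
    MvPolynomial.C_injective _ _ (((hαc 1).symm.trans hμC1))
  -- the univariate shadow
  set i0 : Fin n := ⟨0, hn⟩ with hi0
  set ν : Polynomial P → Polynomial P := fun f => myPhi (μ (myIota i0 f)) with hνdef
  have hμι : ∀ f : Polynomial P, μ (myIota i0 f) = myIota i0 (ν f) := by
    intro f
    have hd : MvPolynomial.aeval (fun _ => MvPolynomial.X i0) (myIota i0 f) =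
        myIota i0 f := by
      rw [← myIota_phi, myPhi_iota]
    have hd2 := hR (MvPolynomial.X i0) (myIota i0 f)
    rw [hd] at hd2
    simp only [hX] at hd2
    rw [hνdef]
    rw [myIota_phi]
    exact hd2
  have hνcomp : ∀ f g : Polynomial P, ν (g.comp f) = (ν g).comp (ν f) := by
    intro f g
    have h1 : μ (myIota i0 (g.comp f)) = myIota i0 ((ν g).comp (ν f)) := by
      rw [myIota_comp, hR, hμι f, hμι g, ← myIota_comp]
    rw [hνdef]
    show myPhi (μ (myIota i0 (g.comp f))) = _
    rw [h1, myPhi_iota]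
  have hνX : ν Polynomial.X = Polynomial.X := by
    rw [hνdef]
    show myPhi (μ (myIota i0 Polynomial.X)) = _
    rw [myIota_X, hX i0, myPhi_X]
  have hνC : ∀ a : P, ν (Polynomial.C a) = Polynomial.C (α a) := by
    intro a
    rw [hνdef]
    show myPhi (μ (myIota i0 (Polynomial.C a))) = _
    rw [myIota_C, hαc a, myPhi_C]
  obtain ⟨hmul, hadd⟩ := univar_alpha ν hνcomp hνX α hνC hα0 hα1
  refine ⟨{ toFun := α
            invFun := β
            left_inv := hβα
            right_inv := hαβ
            map_mul' := hmul
            map_add' := hadd }, fun a => hαc a⟩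

/-- With μ as in Lemma 3.2 of the paper, the restriction of μ to
the constants is a field automorphism of P: μ maps the constants bijectively
onto the constants, additively and multiplicatively. -/
theorem mu_restricts_to_field_automorphism {P : Type*} [Field P] [IsAlgClosed P]
    (n : ℕ) (hn : 1 ≤ n)
    (μ : MvPolynomial (Fin n) P ≃ MvPolynomial (Fin n) P)
    (hμ : GeneratesAut μ)
    (h0 : μ 0 = 0) (h1 : μ 1 = 1)
    (hX : ∀ i : Fin n, μ (MvPolynomial.X i) = MvPolynomial.X i) :
    ∃ α : P ≃+* P, ∀ a : P, μ (MvPolynomial.C a) = MvPolynomial.C (α a) := by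
  exact mu_restricts_to_field_automorphism' n hn μ hμ h0 h1 hX
end

section
/- Let P be an algebraically closed field, n ≥ 1, and A = P[x_1,…,x_n]. Let μ : A → A be a bijection generating an automorphism of End(A) with μ(x_i) = x_i for all i, and suppose in addition that μ fixes every constant: μ(a) = a for all a ∈ P. Then μ is P-homogeneous: μ(a·u) = a·μ(u) for every a ∈ P and every u ∈ A. -/
namespace MvPolynomial

variable {σ R : Type*} [CommRing R]

noncomputable def constEval (b : σ → R) : MvPolynomial σ R →ₐ[R] MvPolynomial σ R :=
  (Algebra.ofId R (MvPolynomial σ R)).comp (aeval b)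

theorem constEval_apply (b : σ → R) (w : MvPolynomial σ R) :
    constEval b w = C (eval b w) := by
  simp [constEval, aeval_eq_eval]

theorem eval_equiv_apply_of_conj_constEval (μ : MvPolynomial σ R ≃ MvPolynomial σ R)
    (hX : ∀ i, μ (X i) = X i) (hC : ∀ a, μ (C a) = C a) (b : σ → R)
    (t : MvPolynomial σ R →ₐ[R] MvPolynomial σ R) (ht : ⇑t = μ ∘ constEval b ∘ μ.symm)
    (v : MvPolynomial σ R) : eval b (μ v) = eval b v := by
  have hsymmX : ∀ i, μ.symm (X i) = X i := fun i => μ.symm_apply_eq.mpr (hX i).symm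
  have ht_eq : t = constEval b := algHom_ext fun i => by
    rw [ht, Function.comp_apply, Function.comp_apply, hsymmX, constEval_apply, hC]
  have hcomm := congrFun ht (μ v)
  rw [ht_eq, Function.comp_apply, Function.comp_apply, μ.symm_apply_apply, constEval_apply,
    constEval_apply, hC] at hcomm
  exact C_injective σ R hcomm

end MvPolynomial

open MvPolynomial in
theorem GeneratesAut.eq_self {P : Type*} [Field P] [Infinite P] {n : ℕ}
    {μ : MvPolynomial (Fin n) P ≃ MvPolynomial (Fin n) P} (hμ : GeneratesAut μ)
    (hX : ∀ i, μ (X i) = X i) (hC : ∀ a, μ (C a) = C a) (v : MvPolynomial (Fin n) P) :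
    μ v = v :=
  funext fun b =>
    let ⟨⟨t, ht⟩, _⟩ := hμ (constEval b)
    eval_equiv_apply_of_conj_constEval μ hX hC b t ht v

theorem mu_homogeneous_general {P : Type*} [Field P] [IsAlgClosed P]
    (n : ℕ)
    (μ : MvPolynomial (Fin n) P ≃ MvPolynomial (Fin n) P)
    (hμ : GeneratesAut μ)
    (hX : ∀ i : Fin n, μ (MvPolynomial.X i) = MvPolynomial.X i)
    (hC : ∀ a : P, μ (MvPolynomial.C a) = MvPolynomial.C a) :
    ∀ (a : P) (u : MvPolynomial (Fin n) P),
      μ (MvPolynomial.C a * u) = MvPolynomial.C a * μ u := by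
  intro a u
  rw [hμ.eq_self hX hC, hμ.eq_self hX hC]

/-- identity (1) of the paper: If μ generates an automorphism of
End(P[X]), fixes all variables and fixes every constant, then μ is
P-homogeneous: μ(a·u) = a·μ(u). -/
theorem mu_homogeneous {P : Type*} [Field P] [IsAlgClosed P]
    (n : ℕ) (hn : 1 ≤ n)
    (μ : MvPolynomial (Fin n) P ≃ MvPolynomial (Fin n) P)
    (hμ : GeneratesAut μ)
    (hX : ∀ i : Fin n, μ (MvPolynomial.X i) = MvPolynomial.X i)
    (hC : ∀ a : P, μ (MvPolynomial.C a) = MvPolynomial.C a) :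
    ∀ (a : P) (u : MvPolynomial (Fin n) P),
      μ (MvPolynomial.C a * u) = MvPolynomial.C a * μ u :=
  mu_homogeneous_general n μ hμ hX hC
end
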